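/- Let G be a graph on n vertices that admits a k-coloring, and let α and β be any two k-colorings of G. Then there exists a (2k−1)-recoloring sequence from α to β in which every vertex is recolored at most twice; in particular, its length is at most 2n. -/

import Mathlib

/-- A `k`-coloring of `G`: colors in `{1,…,k}`, adjacent vertices differently colored. -/
def IsKColoring {V : Type*} (G : SimpleGraph V) (k : ℕ) (γ : V → ℕ) : Prop :=
  (∀ v, γ v ∈ Finset.Icc 1 k) ∧ ∀ u v, G.Adj u v → γ u ≠ γ v

/-- A `k`-recoloring sequence `seq 0, …, seq ℓ` from `α` to `β`:
all are `k`-colorings, and consecutive colorings differ on at most one vertex. -/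
def IsRecolSeq {V : Type*} (G : SimpleGraph V) (k : ℕ) (seq : ℕ → V → ℕ)
    (ℓ : ℕ) (α β : V → ℕ) : Prop :=
  seq 0 = α ∧ seq ℓ = β ∧ (∀ i ≤ ℓ, IsKColoring G k (seq i)) ∧
  ∀ i < ℓ, ∀ u w, seq i u ≠ seq (i+1) u → seq i w ≠ seq (i+1) w → u = w

/-- The graph `B_k`: vertices `b^i_j` for `i,j ∈ {1,…,k}`, with `b^i_j ~ b^{i'}_{j'}`
iff `i ≠ i'` and `j ≠ j'` (the complement of `K_k □ K_k`). -/
def Bgraph (k : ℕ) : SimpleGraph (Fin k × Fin k) where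
  Adj p q := p.1 ≠ q.1 ∧ p.2 ≠ q.2
  symm := ⟨fun p q h => ⟨h.1.symm, h.2.symm⟩⟩
  loopless := ⟨fun p h => h.1 rfl⟩

/-- The coloring `α^k` of `B_k`: `α^k(b^i_j) = i`. -/
def alphak (k : ℕ) : Fin k × Fin k → ℕ := fun p => p.1.val + 1

/-- The coloring `β^k` of `B_k`: `β^k(b^i_j) = j`. -/
def betak (k : ℕ) : Fin k × Fin k → ℕ := fun p => p.2.val + 1

/-!
Pass through the intermediate coloring `μ v = k - 1 + β v`, whose colors `k, …, 2k - 1` overlap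
those of `α` and `β` only in the single color `k`. First recolor every vertex from `α` to `μ`, then
from `μ` to `β`, one vertex at a time. In the first pass the only possible clash is between a vertex
already at `μ`-color `k` and a neighbour still at `α`-color `k`; it cannot occur if the `α`-class of
`k`, an independent set, is recolored first. Symmetrically, the second pass recolors the `β`-class
of `1` first.
-/

section

variable {V : Type*} {G : SimpleGraph V} {k : ℕ}

lemma IsKColoring.mono {k' : ℕ} {γ : V → ℕ} (h : IsKColoring G k γ) (hk : k ≤ k') :
    IsKColoring G k' γ :=
  ⟨fun v => Finset.Icc_subset_Icc_right hk (h.1 v), h.2⟩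

lemma IsKColoring.const_add {γ : V → ℕ} (h : IsKColoring G k γ) (c : ℕ) :
    IsKColoring G (c + k) (fun v => c + γ v) := by
  refine ⟨fun v => ?_, fun u v huv => by simpa using h.2 u v huv⟩
  have := Finset.mem_Icc.mp (h.1 v)
  simp only [Finset.mem_Icc]
  omega

def recolorSteps (seq : ℕ → V → ℕ) (ℓ : ℕ) (v : V) : Finset ℕ :=
  (Finset.range ℓ).filter (fun i => seq i v ≠ seq (i + 1) v)

def sweep (pos γ δ : V → ℕ) (i : ℕ) (v : V) : ℕ :=
  if pos v < i then δ v else γ v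

section Sweep

variable {pos γ δ : V → ℕ}

lemma sweep_zero : sweep pos γ δ 0 = γ :=
  funext fun _ => if_neg (Nat.not_lt_zero _)

lemma sweep_of_forall_lt {i : ℕ} (h : ∀ v, pos v < i) : sweep pos γ δ i = δ :=
  funext fun v => if_pos (h v)

lemma pos_eq_of_sweep_ne {i : ℕ} {v : V} (h : sweep pos γ δ i v ≠ sweep pos γ δ (i + 1) v) :
    pos v = i := by
  unfold sweep at h
  split_ifs at h <;> first | exact absurd rfl h | omega

lemma isKColoring_sweep (hγ : IsKColoring G k γ) (hδ : IsKColoring G k δ)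
    (hconf : ∀ u v, G.Adj u v → pos u < pos v → δ u ≠ γ v) (i : ℕ) :
    IsKColoring G k (sweep pos γ δ i) := by
  refine ⟨fun v => ?_, fun u v huv => ?_⟩
  · unfold sweep
    split_ifs
    exacts [hδ.1 v, hγ.1 v]
  · unfold sweep
    split_ifs with hu hv hv
    · exact hδ.2 u v huv
    · exact hconf u v huv (by omega)
    · exact (hconf v u huv.symm (by omega)).symm
    · exact hγ.2 u v huv

lemma isRecolSeq_sweep {ℓ : ℕ} (hinj : Function.Injective pos) (hlt : ∀ v, pos v < ℓ)
    (hγ : IsKColoring G k γ) (hδ : IsKColoring G k δ)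
    (hconf : ∀ u v, G.Adj u v → pos u < pos v → δ u ≠ γ v) :
    IsRecolSeq G k (sweep pos γ δ) ℓ γ δ :=
  ⟨sweep_zero, sweep_of_forall_lt hlt, fun i _ => isKColoring_sweep hγ hδ hconf i,
    fun _ _ _ _ hu hw => hinj ((pos_eq_of_sweep_ne hu).trans (pos_eq_of_sweep_ne hw).symm)⟩

lemma recolorSteps_sweep_subset (ℓ : ℕ) (v : V) :
    recolorSteps (sweep pos γ δ) ℓ v ⊆ {pos v} := fun _ hi =>
  Finset.mem_singleton.mpr (pos_eq_of_sweep_ne (Finset.mem_filter.mp hi).2).symm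

end Sweep

theorem exists_injective_rank_mem_first [Fintype V] (s : Set V) :
    ∃ pos : V → ℕ, Function.Injective pos ∧ (∀ v, pos v < Fintype.card V) ∧
      ∀ u v, v ∈ s → u ∉ s → pos v < pos u := by
  classical
  let e : V ≃ Fin (Fintype.card s + Fintype.card ↥sᶜ) :=
    (Equiv.Set.sumCompl s).symm.trans
      ((Equiv.sumCongr (Fintype.equivFin s) (Fintype.equivFin ↥sᶜ)).trans finSumFinEquiv)
  have hcard : Fintype.card s + Fintype.card ↥sᶜ = Fintype.card V := by
    rw [← Fintype.card_sum]
    exact Fintype.card_congr (Equiv.Set.sumCompl s)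
  refine ⟨fun v => e v, fun u v h => e.injective (Fin.ext h), fun v => hcard ▸ (e v).isLt, ?_⟩
  intro u v hv hu
  simp only [e, Equiv.trans_apply, Equiv.Set.sumCompl_symm_apply_of_mem hv,
    Equiv.Set.sumCompl_symm_apply_of_notMem hu, Equiv.sumCongr_apply, Sum.map_inl, Sum.map_inr,
    finSumFinEquiv_apply_left, finSumFinEquiv_apply_right, Fin.val_castAdd, Fin.val_natAdd]
  have := (Fintype.equivFin s ⟨v, hv⟩).isLt
  omega

theorem exists_isRecolSeq_recolor_once [Fintype V] {γ δ : V → ℕ} (s : Set V)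
    (hγ : IsKColoring G k γ) (hδ : IsKColoring G k δ) (hs : G.IsIndepSet s)
    (hconf : ∀ u v, G.Adj u v → δ u = γ v → v ∈ s) :
    ∃ seq, IsRecolSeq G k seq (Fintype.card V) γ δ ∧
      ∀ v, (recolorSteps seq (Fintype.card V) v).card ≤ 1 := by
  obtain ⟨pos, hinj, hlt, hfirst⟩ := exists_injective_rank_mem_first s
  have hsafe : ∀ u v, G.Adj u v → pos u < pos v → δ u ≠ γ v := by
    intro u v huv hpos heq
    have hv := hconf u v huv heq
    by_cases hu : u ∈ s
    · exact hs hu hv huv.ne huv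
    · exact (hfirst u v hv hu).not_gt hpos
  refine ⟨sweep pos γ δ, isRecolSeq_sweep hinj hlt hγ hδ hsafe, fun v => ?_⟩
  simpa using Finset.card_le_card (recolorSteps_sweep_subset (γ := γ) (δ := δ) _ v)

def seqAppend (s t : ℕ → V → ℕ) (ℓ i : ℕ) : V → ℕ :=
  if i ≤ ℓ then s i else t (i - ℓ)

section Append

variable {s t : ℕ → V → ℕ} {ℓ m : ℕ}

lemma seqAppend_of_le (hst : s ℓ = t 0) {i : ℕ} (h : ℓ ≤ i) : seqAppend s t ℓ i = t (i - ℓ) := by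
  unfold seqAppend
  split_ifs with h'
  · obtain rfl : i = ℓ := le_antisymm h' h
    rw [hst, Nat.sub_self]
  · rfl

lemma IsRecolSeq.append {α μ β : V → ℕ} (hs : IsRecolSeq G k s ℓ α μ)
    (ht : IsRecolSeq G k t m μ β) : IsRecolSeq G k (seqAppend s t ℓ) (ℓ + m) α β := by
  have hst : s ℓ = t 0 := hs.2.1.trans ht.1.symm
  refine ⟨by rw [seqAppend, if_pos (Nat.zero_le ℓ), hs.1], ?_, fun i hi => ?_, fun i hi => ?_⟩
  · rw [seqAppend_of_le hst (Nat.le_add_right ℓ m), Nat.add_sub_cancel_left, ht.2.1]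
  · rcases le_or_gt i ℓ with h | h
    · rw [seqAppend, if_pos h]
      exact hs.2.2.1 i h
    · rw [seqAppend_of_le hst h.le]
      exact ht.2.2.1 _ (by omega)
  · rcases lt_or_ge i ℓ with h | h
    · simp only [seqAppend, if_pos h.le, if_pos (Nat.succ_le_of_lt h)]
      exact hs.2.2.2 i h
    · rw [seqAppend_of_le hst h, seqAppend_of_le hst (by omega), Nat.sub_add_comm h]
      exact ht.2.2.2 _ (by omega)

lemma recolorSteps_seqAppend_subset (hst : s ℓ = t 0) (v : V) :
    recolorSteps (seqAppend s t ℓ) (ℓ + m) v ⊆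
      recolorSteps s ℓ v ∪ (recolorSteps t m v).image (· + ℓ) := by
  intro i hi
  simp only [recolorSteps, Finset.mem_filter, Finset.mem_range] at hi
  rcases lt_or_ge i ℓ with h | h
  · refine Finset.mem_union_left _ (Finset.mem_filter.mpr ⟨Finset.mem_range.mpr h, ?_⟩)
    simpa only [seqAppend, if_pos h.le, if_pos (Nat.succ_le_of_lt h)] using hi.2
  · refine Finset.mem_union_right _ (Finset.mem_image.mpr
      ⟨i - ℓ, Finset.mem_filter.mpr ⟨Finset.mem_range.mpr (by omega), ?_⟩, Nat.sub_add_cancel h⟩)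
    simpa only [seqAppend_of_le hst h, seqAppend_of_le hst (by omega : ℓ ≤ i + 1),
      Nat.sub_add_comm h] using hi.2

lemma card_recolorSteps_seqAppend_le (hst : s ℓ = t 0) (v : V) :
    (recolorSteps (seqAppend s t ℓ) (ℓ + m) v).card ≤
      (recolorSteps s ℓ v).card + (recolorSteps t m v).card :=
  (Finset.card_le_card (recolorSteps_seqAppend_subset hst v)).trans
    ((Finset.card_union_le _ _).trans (Nat.add_le_add_left Finset.card_image_le _))

end Append

end

theorem stmt_2_general {V : Type*} [Fintype V] (G : SimpleGraph V) (k : ℕ)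
    (α β : V → ℕ) (hα : IsKColoring G k α) (hβ : IsKColoring G k β) :
    ∃ ℓ ≤ 2 * Fintype.card V, ∃ seq : ℕ → V → ℕ,
      IsRecolSeq G (2 * k - 1) seq ℓ α β ∧
      ∀ v, ((Finset.range ℓ).filter (fun i => seq i v ≠ seq (i+1) v)).card ≤ 2 := by
  have hαk (v : V) := Finset.mem_Icc.mp (hα.1 v)
  have hβk (v : V) := Finset.mem_Icc.mp (hβ.1 v)
  have hμ : IsKColoring G (2 * k - 1) (fun v => k - 1 + β v) :=
    (show k - 1 + k = 2 * k - 1 by omega) ▸ hβ.const_add (k - 1)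
  obtain ⟨s, hs, hs_once⟩ := exists_isRecolSeq_recolor_once {v | α v = k}
    (hα.mono (by omega)) hμ (fun u hu v hv _ huv => hα.2 u v huv (hu.trans hv.symm))
    (fun u v _ h => by have := hβk u; have := hαk v; simp only [Set.mem_ofPred_eq]; omega)
  obtain ⟨t, ht, ht_once⟩ := exists_isRecolSeq_recolor_once {v | β v = 1}
    hμ (hβ.mono (by omega)) (fun u hu v hv _ huv => hβ.2 u v huv (hu.trans hv.symm))
    (fun u v _ h => by have := hβk u; have := hβk v; simp only [Set.mem_ofPred_eq]; omega)
  refine ⟨Fintype.card V + Fintype.card V, by omega, seqAppend s t _, hs.append ht, fun v => ?_⟩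
  exact (card_recolorSteps_seqAppend_le (hs.2.1.trans ht.1.symm) v).trans
    (Nat.add_le_add (hs_once v) (ht_once v))

/-- If `G` on `n` vertices admits a `k`-coloring and `α`, `β` are two
`k`-colorings of `G`, then there is a `(2k-1)`-recoloring sequence from `α` to `β`
in which every vertex is recolored at most twice; in particular its length is at
most `2n`. -/
theorem stmt_2 {V : Type*} [Fintype V] (G : SimpleGraph V) (k : ℕ)
    (hcolorable : ∃ γ : V → ℕ, IsKColoring G k γ)
    (α β : V → ℕ) (hα : IsKColoring G k α) (hβ : IsKColoring G k β) :
    ∃ ℓ ≤ 2 * Fintype.card V, ∃ seq : ℕ → V → ℕ,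
      IsRecolSeq G (2 * k - 1) seq ℓ α β ∧
      ∀ v, ((Finset.range ℓ).filter (fun i => seq i v ≠ seq (i+1) v)).card ≤ 2 :=
  stmt_2_general G k α β hα hβ
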